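/- Let S' ⊆ V(G) \ (T \ {t}) be an inclusion-wise minimal multiway near-separator of (G, T \ {t}), where t ∈ T is a terminal such that for every t' ∈ T \ {t} there are no two internally vertex-disjoint t–t' paths in G. Then t ∉ S'. -/

import Mathlib

open SimpleGraph

variable {V : Type*}

/-- The graph obtained from `G` by deleting a set `S` of vertices (kept as
isolated vertices; all edges incident to `S` are removed). -/
def SimpleGraph.eraseVerts (G : SimpleGraph V) (S : Set V) : SimpleGraph V where
  Adj u v := G.Adj u v ∧ u ∉ S ∧ v ∉ S
  symm := ⟨fun u v ⟨h, hu, hv⟩ => ⟨h.symm, hv, hu⟩⟩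
  loopless := ⟨fun v h => G.irrefl h.1⟩

/-- Two walks with the same endpoints are internally vertex-disjoint if they
share no vertex other than their common endpoints. -/
def IntDisjoint {G : SimpleGraph V} {a b : V} (p q : G.Walk a b) : Prop :=
  ∀ x ∈ p.support, x ∈ q.support → x = a ∨ x = b

/-- There exist two internally vertex-disjoint `a`–`b` paths in `G`
(the two paths may coincide if they have no internal vertices). -/
def TwoIVD (G : SimpleGraph V) (a b : V) : Prop :=
  ∃ p q : G.Walk a b, p.IsPath ∧ q.IsPath ∧ IntDisjoint p q

/-- `S` is a multiway near-separator of `(G, T)`. -/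
def IsMWNS (G : SimpleGraph V) (T S : Set V) : Prop :=
  S ⊆ Tᶜ ∧ ∀ t₁ ∈ T, ∀ t₂ ∈ T, t₁ ≠ t₂ → ¬ TwoIVD (G.eraseVerts S) t₁ t₂

/-- `G` contains a simple cycle through at least two terminals of `T`. -/
def HasTCycle (G : SimpleGraph V) (T : Set V) : Prop :=
  ∃ (v : V) (c : G.Walk v v), c.IsCycle ∧
    ∃ t₁ ∈ T, ∃ t₂ ∈ T, t₁ ≠ t₂ ∧ t₁ ∈ c.support ∧ t₂ ∈ c.support

/-- `v` is a cut vertex of `G`. -/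
def IsCutVertex (G : SimpleGraph V) (v : V) : Prop :=
  ∃ a b : V, a ≠ v ∧ b ≠ v ∧ G.Reachable a b ∧ ¬ (G.eraseVerts {v}).Reachable a b

/-- `B` is a block of `G`: a maximal vertex set inducing a connected subgraph
without a cut vertex. -/
def IsBlock (G : SimpleGraph V) (B : Set V) : Prop :=
  B.Nonempty ∧ (G.induce B).Connected ∧ (∀ v, ¬ IsCutVertex (G.induce B) v) ∧
  ∀ B' : Set V, B ⊆ B' → (G.induce B').Connected →
    (∀ v, ¬ IsCutVertex (G.induce B') v) → B' = B

/-!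
If `t ∈ S'`, then `S' \ {t}` is still a near-separator, contradicting minimality.
Indeed, take two internally disjoint paths `p`, `q` between terminals `a`, `b` avoiding
`S' \ {t}`. If both avoid `t` they avoid `S'`, which is impossible. Otherwise `t` lies inside,
say, `p` but not on `q`; splitting `p` at `t` into `a ⟶ t ⟶ b` yields the two internally
disjoint `t`–`a` paths `a ⟶ t` and `t ⟶ b ⟶ a` (the second part along `q`), which `G`
does not have.
-/

namespace SimpleGraph

variable {G : SimpleGraph V}

lemma eraseVerts_le (S : Set V) : G.eraseVerts S ≤ G := fun _ _ h => h.1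

lemma eraseVerts_anti {S S' : Set V} (h : S ⊆ S') : G.eraseVerts S' ≤ G.eraseVerts S :=
  fun _ _ ⟨hadj, hu, hv⟩ => ⟨hadj, fun h' => hu (h h'), fun h' => hv (h h')⟩

lemma eraseVerts_eraseVerts (S U : Set V) :
    (G.eraseVerts S).eraseVerts U = G.eraseVerts (S ∪ U) := by
  ext u v
  simp only [eraseVerts, Set.mem_union]
  tauto

lemma Walk.edges_subset_edgeSet_eraseVerts {u v : V} {U : Set V} (p : G.Walk u v)
    (hp : ∀ x ∈ p.support, x ∉ U) : ∀ e ∈ p.edges, e ∈ (G.eraseVerts U).edgeSet := by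
  intro e he
  induction e with
  | h x y =>
    exact ⟨p.edges_subset_edgeSet he, hp x (p.fst_mem_support_of_mem_edges he),
      hp y (p.snd_mem_support_of_mem_edges he)⟩

end SimpleGraph

section TwoIVD

variable {G H : SimpleGraph V} {a b : V}

lemma IntDisjoint.symm {p q : G.Walk a b} (h : IntDisjoint p q) : IntDisjoint q p :=
  fun x hq hp => h x hp hq

lemma TwoIVD.mono (hGH : G ≤ H) : TwoIVD G a b → TwoIVD H a b := by
  rintro ⟨p, q, hp, hq, hd⟩
  refine ⟨p.mapLe hGH, q.mapLe hGH, (Walk.isPath_mapLe hGH).2 hp, (Walk.isPath_mapLe hGH).2 hq, ?_⟩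
  simpa only [IntDisjoint, Walk.support_mapLe_eq_support] using hd

lemma IntDisjoint.twoIVD_eraseVerts {U : Set V} {p q : G.Walk a b} (hd : IntDisjoint p q)
    (hp : p.IsPath) (hq : q.IsPath) (hpU : ∀ x ∈ p.support, x ∉ U)
    (hqU : ∀ x ∈ q.support, x ∉ U) : TwoIVD (G.eraseVerts U) a b := by
  refine ⟨p.transfer _ (p.edges_subset_edgeSet_eraseVerts hpU),
    q.transfer _ (q.edges_subset_edgeSet_eraseVerts hqU), hp.transfer _, hq.transfer _, ?_⟩
  simpa only [IntDisjoint, Walk.support_transfer] using hd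

lemma IntDisjoint.twoIVD_of_mem_support {t : V} {p q : G.Walk a b} (hd : IntDisjoint p q)
    (hp : p.IsPath) (hq : q.IsPath) (htp : t ∈ p.support) (htq : t ∉ q.support) :
    TwoIVD G t a := by
  obtain ⟨p₁, p₂, hp₁, hp₂, rfl⟩ := hp.mem_support_iff_exists_append.1 htp
  have hsplit : ∀ x ∈ p₁.support, x ∈ p₂.support → x = t := fun x hx₁ hx₂ =>
    by_contra fun hxt => hp.ne_of_mem_support_of_append hxt hx₁ hx₂ rfl
  have hmem : ∀ x ∈ q.reverse.support, x ∈ q.support := fun x hx => by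
    rwa [Walk.support_reverse, List.mem_reverse] at hx
  have hb : b ∉ q.reverse.support.tail := by
    have := hq.reverse.support_nodup
    rw [← q.reverse.cons_tail_support] at this
    exact (List.nodup_cons.1 this).1
  have hta : t ≠ a := fun h => htq (h ▸ q.start_mem_support)
  refine ⟨p₁.reverse, p₂.append q.reverse, hp₁.reverse, ?_, ?_⟩
  · rw [Walk.isPath_def, Walk.support_append]
    refine hp₂.support_nodup.append hq.reverse.support_nodup.tail fun x hx₂ hxq => ?_
    rcases hd x (Walk.mem_support_append_iff _ _ |>.2 (.inr hx₂))
      (hmem x (List.mem_of_mem_tail hxq)) with rfl | rfl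
    · exact hta (hsplit x p₁.start_mem_support hx₂).symm
    · exact hb hxq
  · intro x hx₁ hx₂
    rw [Walk.support_reverse, List.mem_reverse] at hx₁
    rcases (Walk.mem_support_append_iff _ _).1 hx₂ with hx₂ | hxq
    · exact .inl (hsplit x hx₁ hx₂)
    · rcases hd x (Walk.mem_support_append_iff _ _ |>.2 (.inl hx₁)) (hmem x hxq) with rfl | rfl
      · exact .inr rfl
      · exact .inl (hsplit x hx₁ p₂.end_mem_support)

lemma TwoIVD.of_eraseVerts_diff_singleton {S : Set V} {t : V} (hta : t ≠ a) (htb : t ≠ b)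
    (h : TwoIVD (G.eraseVerts (S \ {t})) a b) :
    TwoIVD (G.eraseVerts S) a b ∨ TwoIVD G t a := by
  obtain ⟨p, q, hp, hq, hd⟩ := h
  have hG := eraseVerts_le (G := G) (S \ {t})
  by_cases htp : t ∈ p.support
  · refine .inr ((hd.twoIVD_of_mem_support hp hq htp fun htq => ?_).mono hG)
    rcases hd t htp htq with h | h
    exacts [hta h, htb h]
  by_cases htq : t ∈ q.support
  · exact .inr ((hd.symm.twoIVD_of_mem_support hq hp htq htp).mono hG)
  have h := hd.twoIVD_eraseVerts (U := {t}) hp hq (fun x hx h => htp (h ▸ hx))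
    (fun x hx h => htq (h ▸ hx))
  rw [eraseVerts_eraseVerts] at h
  exact .inl (h.mono (eraseVerts_anti (Set.subset_sdiff_union _ _)))

lemma IsMWNS.diff_singleton {T S : Set V} {t : V} (hS : IsMWNS G T S) (htT : t ∉ T)
    (hsep : ∀ t' ∈ T, ¬ TwoIVD G t t') : IsMWNS G T (S \ {t}) := by
  refine ⟨Set.sdiff_subset.trans hS.1, fun t₁ h₁ t₂ h₂ hne h => ?_⟩
  rcases h.of_eraseVerts_diff_singleton (ne_of_mem_of_not_mem h₁ htT).symm
    (ne_of_mem_of_not_mem h₂ htT).symm with h | h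
  exacts [hS.2 t₁ h₁ t₂ h₂ hne h, hsep t₁ h₁ h]

end TwoIVD

theorem stmt12_general (G : SimpleGraph V) (T : Set V) (t : V)
    (hsep : ∀ t' ∈ T \ {t}, ¬ TwoIVD G t t')
    (S' : Set V) (hS' : IsMWNS G (T \ {t}) S')
    (hmin : ∀ S'' : Set V, S'' ⊂ S' → ¬ IsMWNS G (T \ {t}) S'') :
    t ∉ S' := fun htS =>
  hmin _ (Set.sdiff_singleton_ssubset.2 htS) (hS'.diff_singleton (fun h => h.2 rfl) hsep)

theorem stmt12 (G : SimpleGraph V) (T : Set V) (t : V) (ht : t ∈ T)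
    (hsep : ∀ t' ∈ T \ {t}, ¬ TwoIVD G t t')
    (S' : Set V) (hS' : IsMWNS G (T \ {t}) S')
    (hmin : ∀ S'' : Set V, S'' ⊂ S' → ¬ IsMWNS G (T \ {t}) S'') :
    t ∉ S' :=
  stmt12_general G T t hsep S' hS' hmin
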